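/- arXiv:1607.07412 — 4 statements merged into one kernel-verified Lean document; each statement's English description precedes it below -/
import Mathlib

section
/- Let f : (X,Ω) → (X,Ω) be a continuous map, and let Y ⊆ X be a subspace with the induced topology Ω|_Y such that f(Y) ⊆ Y. Then h_{Ω|_Y}(f|_Y) ≤ h_Ω(f). -/
/-!
Both terms of `h_Ω` can only drop when passing to an invariant subspace `Y`. A compact invariant
subset of `Y` is also one of `X`, with the same topology. An étale cover `π : X' → X` restricts
to an étale cover `π⁻¹(Y) → Y`, and a compactification `Z` of `X'` restricts to a
compactification of `π⁻¹(Y)`, namely the closure of its image in `Z`; this is a closed invariant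
subsystem of `Z`, so its entropy is at most `h_top(f_Z)`. Entropy does not depend on how a compact
system is embedded, since a compact Hausdorff space carries a unique uniformity.
-/

open Set Topology

/-- Topological entropy of a continuous self-map of a compact Hausdorff space, computed
with respect to the unique uniform structure compatible with the topology. -/
noncomputable def htop {Z : Type*} [TopologicalSpace Z] [CompactSpace Z] [T2Space Z]
    (g : Z → Z) : EReal :=
  @Dynamics.coverEntropy Z uniformSpaceOfCompactR1 g Set.univ

/-- `h_CR(f,Ω)`: the supremum of the topological entropies of the restrictions of `f` to
compact (Hausdorff) invariant subsets, or `0` if there is no such nonempty subset. -/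
noncomputable def hCR {X : Type*} [TopologicalSpace X] (f : X → X) : EReal :=
  sSup ({0} ∪ {h : EReal | ∃ (K : Set X) (hK : IsCompact K) (t2K : T2Space K)
    (hf : Set.MapsTo f K K),
    h = @htop K _ (isCompact_iff_compactSpace.mp hK) t2K (hf.restrict f K K)})

/-- `(f', X', Ω')` is an étale cover of `(f, X, Ω)` via `π`: `π` is a continuous surjection
with finite fibers satisfying `π ∘ f' = f ∘ π` (and `f'` is continuous). -/
def IsEtaleCover {X X' : Type*} [TopologicalSpace X] [TopologicalSpace X']
    (f : X → X) (f' : X' → X') (π : X' → X) : Prop :=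
  Continuous f' ∧ Continuous π ∧ Function.Surjective π ∧ (∀ x : X, (π ⁻¹' {x}).Finite) ∧
    π ∘ f' = f ∘ π

/-- `(f_Z, Z, Ω_Z)` is a compactification of `(f', X', Ω')` via the embedding `e`:
`Z` is compact Hausdorff (recorded by the instance arguments), `e` is a dense embedding
and `f_Z` is a continuous extension of `f'` along `e`. -/
def IsCompactification {X' Z : Type*} [TopologicalSpace X'] [TopologicalSpace Z]
    [CompactSpace Z] [T2Space Z] (f' : X' → X') (fZ : Z → Z) (e : X' → Z) : Prop :=
  Continuous fZ ∧ IsEmbedding e ∧ DenseRange e ∧ fZ ∘ e = e ∘ f'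

/-- The set of entropies of all compactifications of all étale covers of `(f, X, Ω)`,
i.e. of all members of the class `𝒜(Ω,f)`. -/
def etaleCompEntropies {X : Type u} [TopologicalSpace X] (f : X → X) : Set EReal :=
  {h : EReal | ∃ (X' : Type u) (tX' : TopologicalSpace X') (f' : X' → X') (π : X' → X),
    IsEtaleCover f f' π ∧
    ∃ (Z : Type u) (tZ : TopologicalSpace Z) (cZ : CompactSpace Z) (t2Z : T2Space Z)
      (fZ : Z → Z) (e : X' → Z),
      @IsCompactification X' Z tX' tZ cZ t2Z f' fZ e ∧ h = @htop Z tZ cZ t2Z fZ}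

/-- The entropy `h_Ω(f)` of an arbitrary topological dynamical system:
the maximum of `h_CR(f,Ω)` and `inf {h_top(f_Z) : (f_Z,Z,Ω_Z) ∈ 𝒜(Ω,f)}`. -/
noncomputable def hOmega {X : Type u} [TopologicalSpace X] (f : X → X) : EReal :=
  max (hCR f) (sInf (etaleCompEntropies f))

open Dynamics Function

theorem htop_le_of_injective_semiconj {A B : Type*} [TopologicalSpace A] [CompactSpace A]
    [T2Space A] [TopologicalSpace B] [CompactSpace B] [T2Space B] {gA : A → A} {gB : B → B}
    {φ : A → B} (hφ : Continuous φ) (hφi : Injective φ) (h : Semiconj φ gA gB) :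
    htop gA ≤ htop gB := by
  let : UniformSpace B := uniformSpaceOfCompactR1
  have hcomap : UniformSpace.comap φ ‹_› = uniformSpaceOfCompactR1 := by
    refine unique_uniformity_of_compact ?_ rfl
    rw [UniformSpace.toTopologicalSpace_comap]
    exact (hφ.isClosedEmbedding hφi).eq_induced.symm
  rw [htop, htop, ← hcomap, ← coverEntropy_image_of_comap _ h]
  exact coverEntropy_monotone gB (subset_univ _)

theorem hCR_le_of_semiconj_isEmbedding {X Y : Type*} [TopologicalSpace X] [TopologicalSpace Y]
    {f : X → X} {g : Y → Y} {ι : Y → X} (hι : IsEmbedding ι) (h : Semiconj ι g f) :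
    hCR g ≤ hCR f := by
  refine sSup_le_sSup_of_isCofinalFor ?_
  rintro _ (rfl | ⟨K, hK, _, hgK, rfl⟩)
  · exact ⟨0, .inl rfl, le_rfl⟩
  have : CompactSpace K := isCompact_iff_compactSpace.mp hK
  let φ : K ≃ₜ ι '' K := hι.homeomorphImage K
  have : T2Space (ι '' K) := φ.t2Space
  have : CompactSpace (ι '' K) := φ.compactSpace
  have hφ : Semiconj φ (hgK.restrict g K K) ((h.mapsTo_image hgK).restrict f _ _) :=
    fun y ↦ Subtype.ext (h y)
  exact ⟨_, .inr ⟨ι '' K, hK.image hι.continuous, ‹_›, h.mapsTo_image hgK, rfl⟩,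
    htop_le_of_injective_semiconj φ.continuous φ.injective hφ⟩

instance closure.compactSpace {Z : Type*} [TopologicalSpace Z] [CompactSpace Z] (s : Set Z) :
    CompactSpace (closure s) :=
  isCompact_iff_compactSpace.mp isClosed_closure.isCompact

section Restrict

variable {X X' Z : Type*} [TopologicalSpace X] [TopologicalSpace X'] [TopologicalSpace Z]
  {f : X → X} {f' : X' → X'} {π : X' → X} {Y : Set X}

theorem IsEtaleCover.mapsTo_preimage (hπ : IsEtaleCover f f' π) (hY : MapsTo f Y Y) :
    MapsTo f' (π ⁻¹' Y) (π ⁻¹' Y) := fun x hx ↦ by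
  rw [mem_preimage, ← comp_apply (f := π), hπ.2.2.2.2, comp_apply]
  exact hY hx

theorem IsEtaleCover.restrictPreimage (hπ : IsEtaleCover f f' π) (hY : MapsTo f Y Y) :
    IsEtaleCover (hY.restrict f Y Y) ((hπ.mapsTo_preimage hY).restrict f' _ _)
      (Y.restrictPreimage π) := by
  obtain ⟨hf', hπc, hπs, hfin, hcomm⟩ := hπ
  refine ⟨hf'.restrict _, hπc.restrictPreimage, hπs.restrictPreimage Y, fun y ↦ ?_,
    funext fun x ↦ Subtype.ext (congrFun hcomm x)⟩
  refine ((hfin y).preimage Subtype.val_injective.injOn).subset fun x hx ↦ ?_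
  exact congrArg Subtype.val hx

variable [CompactSpace Z] [T2Space Z] {fZ : Z → Z} {e : X' → Z} {S : Set X'}

theorem IsCompactification.mapsTo_closure_image (he : IsCompactification f' fZ e)
    (hS : MapsTo f' S S) : MapsTo fZ (closure (e '' S)) (closure (e '' S)) :=
  (Semiconj.mapsTo_image (fun x ↦ (congrFun he.2.2.2 x).symm) hS).closure he.1

theorem IsCompactification.restrict_closure_image (he : IsCompactification f' fZ e)
    (hS : MapsTo f' S S) :
    IsCompactification (hS.restrict f' S S) ((he.mapsTo_closure_image hS).restrict fZ _ _)
      (((mapsTo_image e S).mono_right subset_closure).restrict e S (closure (e '' S))) := by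
  obtain ⟨hfZ, hemb, -, hcomm⟩ := he
  refine ⟨hfZ.restrict _, hemb.restrict _, ?_, funext fun x ↦ Subtype.ext (congrFun hcomm x)⟩
  rw [DenseRange, Subtype.dense_iff, ← range_comp, MapsTo.coe_restrict, range_domRestrict]

end Restrict

theorem sInf_etaleCompEntropies_restrict_le {X : Type u} [TopologicalSpace X] {f : X → X}
    {Y : Set X} (hY : MapsTo f Y Y) :
    sInf (etaleCompEntropies (hY.restrict f Y Y)) ≤ sInf (etaleCompEntropies f) := by
  refine sInf_le_sInf_of_isCoinitialFor ?_
  rintro _ ⟨X', _, f', π, hπ, Z, _, _, _, fZ, e, he, rfl⟩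
  have hS := hπ.mapsTo_preimage hY
  exact ⟨_, ⟨_, _, _, _, hπ.restrictPreimage hY, _, _, _, _, _, _,
    he.restrict_closure_image hS, rfl⟩, htop_le_of_injective_semiconj continuous_subtype_val
    Subtype.val_injective (he.mapsTo_closure_image hS).val_restrict_apply⟩

theorem stmt_1_general {X : Type u} [TopologicalSpace X] (f : X → X)
    (Y : Set X) (hY : Set.MapsTo f Y Y) :
    hOmega (hY.restrict f Y Y) ≤ hOmega f :=
  max_le_max (hCR_le_of_semiconj_isEmbedding IsEmbedding.subtypeVal hY.val_restrict_apply)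
    (sInf_etaleCompEntropies_restrict_le hY)

/-- If `Y ⊆ X` is an invariant subspace (with the induced topology) of a continuous map
`f : (X,Ω) → (X,Ω)`, then `h_{Ω|_Y}(f|_Y) ≤ h_Ω(f)`. -/
theorem stmt_1 {X : Type u} [TopologicalSpace X] (f : X → X) (hf : Continuous f)
    (Y : Set X) (hY : Set.MapsTo f Y Y) :
    hOmega (hY.restrict f Y Y) ≤ hOmega f :=
  stmt_1_general f Y hY
end

section
/- Let f : (X,Ω) → (X,Ω) and f' : (X',Ω') → (X',Ω') be continuous maps and π : X' → X a continuous surjection with π ∘ f' = f ∘ π. Assume π is proper, i.e. the preimage of every compact set is compact. Then h_CR(f,Ω) ≤ h_CR(f',Ω'). -/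
open Set Topology

/-
A compact invariant set `K ⊆ X` pulls back, by properness, to the compact invariant set
`π⁻¹' K ⊆ X'`, and `π` restricts to a continuous surjection `π⁻¹' K → K` semiconjugating
`f'` to `f`. A factor of a compact system has no larger entropy, so every entropy competing
in `h_CR(f)` is dominated by one competing in `h_CR(f')`.
-/

lemma htop_le_of_semiconj {A B : Type*} [TopologicalSpace A] [CompactSpace A] [T2Space A]
    [TopologicalSpace B] [CompactSpace B] [T2Space B]
    {S : A → A} {T : B → B} {φ : A → B} (hc : Continuous φ) (hs : Function.Surjective φ)
    (h : Function.Semiconj φ S T) : htop T ≤ htop S := by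
  let : UniformSpace A := uniformSpaceOfCompactR1
  let : UniformSpace B := uniformSpaceOfCompactR1
  have := Dynamics.coverEntropy_image_le_of_uniformContinuous h
    (CompactSpace.uniformContinuous_of_continuous hc) univ
  rwa [image_univ, hs.range_eq] at this

section hCR

variable {X : Type*} [TopologicalSpace X] {f : X → X}

lemma htop_restrict_le_hCR {K : Set X} [CompactSpace K] [T2Space K] (hf : MapsTo f K K) :
    htop (hf.restrict f K K) ≤ hCR f :=
  le_sSup (Or.inr ⟨K, isCompact_iff_compactSpace.mpr ‹_›, ‹_›, hf, rfl⟩)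

lemma hCR_le {c : EReal} (h0 : 0 ≤ c)
    (h : ∀ (K : Set X) [CompactSpace K] [T2Space K] (hf : MapsTo f K K),
      htop (hf.restrict f K K) ≤ c) :
    hCR f ≤ c := by
  refine sSup_le ?_
  rintro _ (rfl | ⟨K, hK, _, hf, rfl⟩)
  · exact h0
  · have := isCompact_iff_compactSpace.mp hK
    exact h K hf

lemma zero_le_hCR : 0 ≤ hCR f :=
  le_sSup (Or.inl rfl)

end hCR

theorem stmt_8_general {X X' : Type*} [TopologicalSpace X]
    [TopologicalSpace X'] [T2Space X']
    (f : X → X) (f' : X' → X') (π : X' → X)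
    (hπ : Continuous π)
    (hsurj : Function.Surjective π) (hsemi : π ∘ f' = f ∘ π)
    (hproper : ∀ K : Set X, IsCompact K → IsCompact (π ⁻¹' K)) :
    hCR f ≤ hCR f' := by
  refine hCR_le zero_le_hCR fun K _ _ hfK => ?_
  have hfK' : MapsTo f' (π ⁻¹' K) (π ⁻¹' K) := fun x hx =>
    show (π ∘ f') x ∈ K by rw [hsemi]; exact hfK hx
  have : CompactSpace (π ⁻¹' K) :=
    isCompact_iff_compactSpace.mp (hproper K (isCompact_iff_compactSpace.mpr ‹_›))
  calc htop (hfK.restrict f K K)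
      ≤ htop (hfK'.restrict f' _ _) :=
        htop_le_of_semiconj hπ.restrictPreimage (restrictPreimage_surjective K hsurj)
          fun x => Subtype.ext (congrFun hsemi x)
    _ ≤ hCR f' := htop_restrict_le_hCR hfK'

/-- If `π : X' → X` is a proper continuous surjection with `π ∘ f' = f ∘ π`, then
`h_CR(f,Ω) ≤ h_CR(f',Ω')`. -/
theorem stmt_8 {X X' : Type*} [TopologicalSpace X] [T2Space X]
    [TopologicalSpace X'] [T2Space X']
    (f : X → X) (f' : X' → X') (π : X' → X)
    (hf : Continuous f) (hf' : Continuous f') (hπ : Continuous π)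
    (hsurj : Function.Surjective π) (hsemi : π ∘ f' = f ∘ π)
    (hproper : ∀ K : Set X, IsCompact K → IsCompact (π ⁻¹' K)) :
    hCR f ≤ hCR f' :=
  stmt_8_general f f' π hπ hsurj hsemi hproper
end

section
/- Let f : ℕ → ℕ, f(n) = n + 1, where ℕ carries the subspace topology Ω induced from ℝ (equivalently, the discrete topology). Then h_Ω(f) = 0. -/
open Set Topology

/-!
Compact subsets of the discrete space `ℕ` are finite, and a nonempty finite set invariant under
`n ↦ n + 1` would contain the successor of its maximum, so `h_CR = 0`. For the other term it
suffices to exhibit one compactification of zero entropy: the one-point compactification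
`ℕ ∪ {∞}` with `∞` fixed. Every entourage `U` contains `(m, ∞)` for all `m` beyond some `N`,
and this condition is preserved along forward orbits, so `{0, …, N - 1, ∞}` is a
`(U, n)`-dynamical cover for every `n`: the minimal cover sizes stay bounded and the entropy
vanishes.
-/

open Filter Dynamics
open scoped Uniformity

section CoverEntropy

variable {X : Type*} {T : X → X} {F : Set X}

lemma coverEntropyEntourage_nonpos_of_isDynCoverOf {U : SetRel X X} {s : Set X}
    (hs : s.Finite) (h : ∀ n, IsDynCoverOf T F U n s) : coverEntropyEntourage T F U ≤ 0 := by
  have hcard (n : ℕ) : (coverMincard T F U n : ENNReal) ≤ hs.toFinset.card * 1 := by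
    rw [mul_one]
    exact_mod_cast (hs.coe_toFinset ▸ h n).coverMincard_le_card
  calc coverEntropyEntourage T F U
      ≤ ExpGrowth.expGrowthSup 1 :=
        ExpGrowth.expGrowthSup_le_of_eventually_le (v := 1) (ENNReal.natCast_ne_top _)
          (Eventually.of_forall hcard)
    _ = 0 := ExpGrowth.expGrowthSup_const one_ne_zero ENNReal.one_ne_top

lemma coverEntropy_nonpos_of_forall_finite_isDynCoverOf [UniformSpace X]
    (h : ∀ U ∈ 𝓤 X, ∃ s : Set X, s.Finite ∧ ∀ n, IsDynCoverOf T F U n s) :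
    coverEntropy T F ≤ 0 :=
  iSup₂_le fun U hU ↦
    let ⟨_, hs, hcover⟩ := h U hU
    coverEntropyEntourage_nonpos_of_isDynCoverOf hs hcover

end CoverEntropy

lemma htop_eq_bot_of_isEmpty {Z : Type*} [TopologicalSpace Z] [CompactSpace Z] [T2Space Z]
    [IsEmpty Z] (g : Z → Z) : htop g = ⊥ := by
  rw [htop, Set.univ_eq_empty_iff.mpr ‹_›]
  exact @coverEntropy_empty Z g uniformSpaceOfCompactR1

lemma hCR_eq_zero_of_forall_eq_empty {X : Type*} [TopologicalSpace X] {f : X → X}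
    (h : ∀ K : Set X, IsCompact K → MapsTo f K K → K = ∅) : hCR f = 0 := by
  refine le_antisymm (sSup_le ?_) (le_sSup (Or.inl rfl))
  rintro _ (rfl | ⟨K, hK, _, hf, rfl⟩)
  · exact le_rfl
  · obtain rfl := h K hK hf
    exact (htop_eq_bot_of_isEmpty _).trans_le bot_le

lemma sInf_etaleCompEntropies_le_htop {X Z : Type u} [TopologicalSpace X] [TopologicalSpace Z]
    [CompactSpace Z] [T2Space Z] {f : X → X} (hf : Continuous f) {fZ : Z → Z} {e : X → Z}
    (he : IsCompactification f fZ e) : sInf (etaleCompEntropies f) ≤ htop fZ :=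
  sInf_le ⟨X, _, f, id, ⟨hf, continuous_id, Function.surjective_id, fun _ ↦ finite_singleton _,
    rfl⟩, Z, _, _, _, fZ, e, he, rfl⟩

lemma Nat.coclosedCompact_eq_atTop : coclosedCompact ℕ = atTop := by
  rw [coclosedCompact_eq_cocompact, cocompact_eq_cofinite, Nat.cofinite_eq_atTop]

lemma Nat.eq_empty_of_isCompact_of_mapsTo_add_one {K : Set ℕ} (hK : IsCompact K)
    (hf : MapsTo (· + 1) K K) : K = ∅ := by
  by_contra hne
  have hsup := Nat.sSup_mem (nonempty_iff_ne_empty.2 hne) hK.bddAbove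
  exact (le_csSup hK.bddAbove (hf hsup)).not_gt (Nat.lt_succ_self _)

namespace OnePoint

lemma isCompactification_map {X : Type*} [TopologicalSpace X] [LocallyCompactSpace X]
    [T2Space X] [NoncompactSpace X] {f : X → X} (hf : Continuous f)
    (hf' : Tendsto f (coclosedCompact X) (coclosedCompact X)) :
    IsCompactification f (OnePoint.map f) (↑) :=
  ⟨continuous_map hf hf', isOpenEmbedding_coe.isEmbedding, denseRange_coe, rfl⟩

local notation "succ∞" => OnePoint.map (fun n : ℕ ↦ n + 1)

lemma isCompactification_map_add_one :
    IsCompactification (fun n : ℕ ↦ n + 1) succ∞ (↑) :=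
  isCompactification_map continuous_of_discreteTopology <| by
    simpa only [Nat.coclosedCompact_eq_atTop] using tendsto_add_atTop_nat 1

lemma iterate_map_add_one_coe (m k : ℕ) : succ∞^[k] (m : OnePoint ℕ) = ↑(m + k) := by
  have : Function.Semiconj ((↑) : ℕ → OnePoint ℕ) (· + 1) succ∞ := fun _ ↦ rfl
  rw [← (this.iterate_right k).eq m]
  simp

lemma isDynCoverOf_map_add_one {U : SetRel (OnePoint ℕ) (OnePoint ℕ)} [U.IsRefl] {N : ℕ}
    (hN : ∀ m ≥ N, ((m : OnePoint ℕ), (∞ : OnePoint ℕ)) ∈ U) (n : ℕ) :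
    IsDynCoverOf succ∞ univ U n (insert ∞ ((↑) '' Iio N)) := by
  rintro x -
  induction x using OnePoint.rec with
  | infty => exact ⟨∞, mem_insert _ _, SetRel.rfl _⟩
  | coe m =>
    rcases lt_or_ge m N with hm | hm
    · exact ⟨m, mem_insert_of_mem _ (mem_image_of_mem _ hm), SetRel.rfl _⟩
    · refine ⟨∞, mem_insert _ _, mem_dynEntourage.mpr fun k _ ↦ ?_⟩
      rw [iterate_map_add_one_coe, Function.iterate_fixed rfl]
      exact hN _ (by omega)

lemma htop_map_add_one_nonpos : htop succ∞ ≤ 0 := by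
  let := @uniformSpaceOfCompactR1 (OnePoint ℕ) _ _ _
  refine coverEntropy_nonpos_of_forall_finite_isDynCoverOf fun U hU ↦ ?_
  obtain ⟨N, hN⟩ := eventually_atTop.mp <| Nat.coclosedCompact_eq_atTop ▸
    tendsto_coe_infty.eventually (mem_nhds_right ∞ hU)
  have := isRefl_of_mem_uniformity hU
  exact ⟨_, ((finite_Iio N).image _).insert ∞, isDynCoverOf_map_add_one hN⟩

end OnePoint

/-- For `f : ℕ → ℕ`, `f(n) = n + 1` (with the discrete topology induced from `ℝ`),
`h_Ω(f) = 0`. -/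
theorem stmt_15 : hOmega (fun n : ℕ => n + 1) = 0 := by
  have hCR_eq : hCR (fun n : ℕ => n + 1) = 0 :=
    hCR_eq_zero_of_forall_eq_empty fun _ ↦ Nat.eq_empty_of_isCompact_of_mapsTo_add_one
  rw [hOmega, hCR_eq]
  exact max_eq_left <| (sInf_etaleCompEntropies_le_htop continuous_of_discreteTopology
    OnePoint.isCompactification_map_add_one).trans OnePoint.htop_map_add_one_nonpos
end

section
/- Let f : ℝ → ℝ, f(x) = 2x, where ℝ carries its usual topology Ω. Then h_Ω(f) = 0. -/
open Set Topology

/-!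
A compact set invariant under `x ↦ 2x` lies in `{0}`, so `h_CR = 0`. For the other term, `ℝ`
is an étale cover of itself, and `x ↦ x / (1 + |x|)` compactifies it to `[-1, 1]`, on which the
doubling map extends to an order automorphism. Order automorphisms `g` of a compact interval
have zero entropy: pulling a finite `δ`-dense set back along `g⁻¹, …, g⁻⁽ⁿ⁻¹⁾` yields an
`(n, δ)`-cover with only linearly many points, because any two consecutive points of it stay
`δ`-close under `g, …, gⁿ⁻¹`.
-/

open Dynamics ExpGrowth Filter
open scoped ENNReal

lemma ExpGrowth.expGrowthSup_natCast : expGrowthSup (fun n : ℕ ↦ (n : ℝ≥0∞)) = 0 := by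
  apply Tendsto.limsup_eq
  have hreal : Tendsto (fun x : ℝ ↦ Real.log x / x) atTop (𝓝 0) := by
    simpa using Real.tendsto_pow_log_div_mul_add_atTop 1 0 1 one_ne_zero
  refine ((EReal.tendsto_coe.2 hreal).comp tendsto_natCast_atTop_atTop).congr' ?_
  filter_upwards [eventually_ne_atTop 0] with n hn
  rw [Function.comp_apply, EReal.coe_div, ENNReal.log_pos_real (by exact_mod_cast hn)
    (ENNReal.natCast_ne_top n), ENNReal.toReal_natCast, EReal.coe_coe_eq_natCast]

lemma Dynamics.coverEntropyEntourage_nonpos_of_card_le_mul {X : Type*} {T : X → X} {F : Set X}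
    {U : SetRel X X} (C : ℕ)
    (h : ∀ n ≠ 0, ∃ s : Finset X, IsDynCoverOf T F U n s ∧ s.card ≤ n * C) :
    coverEntropyEntourage T F U ≤ 0 := by
  rw [← expGrowthSup_natCast]
  refine expGrowthSup_le_of_eventually_le (b := C) (ENNReal.natCast_ne_top C) ?_
  filter_upwards [eventually_ne_atTop 0] with n hn
  obtain ⟨s, hs, hcard⟩ := h n hn
  calc (coverMincard T F U n : ℝ≥0∞) ≤ s.card := by exact_mod_cast hs.coverMincard_le_card
    _ ≤ C * n := by rw [mul_comm]; exact_mod_cast hcard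

lemma Set.Subsingleton.coverEntropy_nonpos {X : Type*} [UniformSpace X] {F : Set X}
    (hF : F.Subsingleton) (T : X → X) : coverEntropy T F ≤ 0 := by
  refine iSup₂_le fun U hU ↦ coverEntropyEntourage_nonpos_of_card_le_mul 1 fun n hn ↦ ?_
  refine ⟨hF.finite.toFinset, fun x hx ↦ ⟨x, hF.finite.mem_toFinset.2 hx, ?_⟩, ?_⟩
  · exact mem_dynEntourage.2 fun _ _ ↦ refl_mem_uniformity hU
  · calc hF.finite.toFinset.card ≤ 1 := Finset.card_le_one.2 fun x hx y hy ↦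
          hF (hF.finite.mem_toFinset.1 hx) (hF.finite.mem_toFinset.1 hy)
      _ ≤ n * 1 := by rw [mul_one]; exact Nat.one_le_iff_ne_zero.2 hn

lemma htop_eq_coverEntropy {Z : Type*} [UniformSpace Z] [CompactSpace Z] [T2Space Z]
    (g : Z → Z) : htop g = coverEntropy g univ := by
  have : uniformSpaceOfCompactR1 = ‹UniformSpace Z› := unique_uniformity_of_compact rfl rfl
  rw [htop, this]

lemma hCR_eq_zero_of_forall_subsingleton {X : Type*} [TopologicalSpace X] {f : X → X}
    (h : ∀ K : Set X, IsCompact K → MapsTo f K K → K.Subsingleton) : hCR f = 0 := by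
  refine le_antisymm (sSup_le ?_) (le_sSup (mem_union_left _ rfl))
  rintro _ (rfl | ⟨K, hK, -, hf, rfl⟩)
  · exact le_rfl
  · have : Subsingleton K := (h K hK hf).coe_sort
    let _ : UniformSpace K := uniformSpaceOfCompactR1
    exact subsingleton_univ.coverEntropy_nonpos _

lemma subset_zero_of_isCompact_of_mapsTo_smul {𝕜 E : Type*} [NormedField 𝕜]
    [NormedAddCommGroup E] [NormedSpace 𝕜 E] {c : 𝕜} (hc : 1 < ‖c‖) {K : Set E}
    (hK : IsCompact K) (hf : MapsTo (c • ·) K K) : K ⊆ {0} := by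
  intro x hx
  by_contra hx0
  have hx_pos : 0 < ‖x‖ := norm_pos_iff.2 hx0
  obtain ⟨C, hC⟩ := isBounded_iff_forall_norm_le.1 hK.isBounded
  obtain ⟨n, hn⟩ := pow_unbounded_of_one_lt (C / ‖x‖) hc
  have horbit : c ^ n • x ∈ K := by simpa [smul_iterate] using hf.iterate n hx
  have := hC _ horbit
  rw [norm_smul, norm_pow] at this
  rw [div_lt_iff₀ hx_pos] at hn
  linarith

lemma isEtaleCover_id {X : Type*} [TopologicalSpace X] {f : X → X} (hf : Continuous f) :
    IsEtaleCover f f id :=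
  ⟨hf, continuous_id, Function.surjective_id, fun x ↦ by simp, rfl⟩

section OrderIsoIcc

variable {a b δ : ℝ}

lemma exists_finset_Icc_mem_Ioo_of_add_lt (hab : a ≤ b) (hδ : 0 < δ) :
    ∃ G : Finset (Icc a b), (∀ x, ∃ t ∈ G, t ≤ x) ∧ (∀ x, ∃ t ∈ G, x ≤ t) ∧
      ∀ p q : Icc a b, (p : ℝ) + δ < q → ∃ t ∈ G, p < t ∧ t < q := by
  classical
  obtain ⟨N, -, hN, hcover⟩ :=
    finite_cover_balls_of_compact (isCompact_univ (X := Icc a b)) (half_pos hδ)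
  refine ⟨insert ⟨a, left_mem_Icc.2 hab⟩ (insert ⟨b, right_mem_Icc.2 hab⟩ hN.toFinset),
    fun x ↦ ⟨_, Finset.mem_insert_self _ _, x.2.1⟩,
    fun x ↦ ⟨_, Finset.mem_insert_of_mem (Finset.mem_insert_self _ _), x.2.2⟩, ?_⟩
  intro p q hpq
  let m : Icc a b := ⟨(p + q) / 2, by constructor <;> linarith [p.2.1, q.2.1, p.2.2, q.2.2]⟩
  obtain ⟨t, ht, hmt⟩ := mem_iUnion₂.1 (hcover (mem_univ m))
  rw [Metric.mem_ball, Subtype.dist_eq, Real.dist_eq, abs_lt, show (m : ℝ) = (p + q) / 2 from rfl]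
    at hmt
  refine ⟨t, Finset.mem_insert_of_mem (Finset.mem_insert_of_mem (hN.mem_toFinset.2 ht)), ?_, ?_⟩
  · change (p : ℝ) < t
    linarith [hmt.2]
  · change (t : ℝ) < q
    linarith [hmt.1]

lemma OrderIso.isDynCoverOf_Icc (g : Icc a b ≃o Icc a b) {G : Finset (Icc a b)}
    (hlow : ∀ x, ∃ t ∈ G, t ≤ x) (hup : ∀ x, ∃ t ∈ G, x ≤ t)
    (hgap : ∀ p q : Icc a b, (p : ℝ) + δ < q → ∃ t ∈ G, p < t ∧ t < q) {n : ℕ} (hn : n ≠ 0) :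
    IsDynCoverOf g univ {p | dist p.1 p.2 ≤ δ} n
      ((Finset.range n).biUnion fun i ↦ G.image g.symm^[i]) := by
  set s := (Finset.range n).biUnion fun i ↦ G.image g.symm^[i]
  have hmem : ∀ i < n, ∀ t ∈ G, g.symm^[i] t ∈ s := fun i hi t ht ↦
    Finset.mem_biUnion.2 ⟨i, Finset.mem_range.2 hi, Finset.mem_image_of_mem _ ht⟩
  have hG : ∀ t ∈ G, t ∈ s := hmem 0 (Nat.pos_of_ne_zero hn)
  have hmono : ∀ i, StrictMono g^[i] := fun i ↦ g.strictMono.iterate i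
  intro x _
  obtain ⟨p, hp, hp_max⟩ := (s.filter (· ≤ x)).exists_max_image id
    (let ⟨t, ht, htx⟩ := hlow x; ⟨t, Finset.mem_filter.2 ⟨hG t ht, htx⟩⟩)
  obtain ⟨q, hq, hq_min⟩ := (s.filter (x ≤ ·)).exists_min_image id
    (let ⟨t, ht, hxt⟩ := hup x; ⟨t, Finset.mem_filter.2 ⟨hG t ht, hxt⟩⟩)
  rw [Finset.mem_filter] at hp hq
  refine ⟨p, hp.1, mem_dynEntourage.2 fun i hi ↦ ?_⟩
  -- a point of `G` strictly between `gⁱ p` and `gⁱ q` would pull back to a point of `s`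
  -- strictly between `p` and `q`
  have hclose : (g^[i] q : ℝ) ≤ g^[i] p + δ := by
    by_contra! hfar
    obtain ⟨t, ht, hpt, htq⟩ := hgap _ _ hfar
    have hinv : g^[i] (g.symm^[i] t) = t := g.toEquiv.rightInverse_symm.iterate i t
    rw [← hinv, (hmono i).lt_iff_lt] at hpt htq
    rcases le_total (g.symm^[i] t) x with htx | hxt
    · exact (hp_max _ (Finset.mem_filter.2 ⟨hmem i hi t ht, htx⟩)).not_gt hpt
    · exact (hq_min _ (Finset.mem_filter.2 ⟨hmem i hi t ht, hxt⟩)).not_gt htq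
  have hpx : (g^[i] p : ℝ) ≤ g^[i] x := (hmono i).monotone hp.2
  have hxq : (g^[i] x : ℝ) ≤ g^[i] q := (hmono i).monotone hq.2
  change dist (g^[i] x) (g^[i] p) ≤ δ
  rw [Subtype.dist_eq, Real.dist_eq, abs_of_nonneg (sub_nonneg.2 hpx)]
  linarith

theorem OrderIso.coverEntropy_Icc_eq_zero (hab : a ≤ b) (g : Icc a b ≃o Icc a b) :
    coverEntropy g univ = 0 := by
  refine le_antisymm ?_ (coverEntropy_nonneg _ ⟨⟨a, left_mem_Icc.2 hab⟩, mem_univ _⟩)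
  rw [coverEntropy_eq_iSup_basis Metric.uniformity_basis_dist_le]
  refine iSup₂_le fun δ hδ ↦ ?_
  obtain ⟨G, hlow, hup, hgap⟩ := exists_finset_Icc_mem_Ioo_of_add_lt hab hδ
  refine coverEntropyEntourage_nonpos_of_card_le_mul G.card fun n hn ↦
    ⟨_, g.isDynCoverOf_Icc hlow hup hgap hn, ?_⟩
  calc _ ≤ (Finset.range n).card * G.card :=
        Finset.card_biUnion_le_card_mul _ _ _ fun _ _ ↦ Finset.card_image_le
    _ = n * G.card := by rw [Finset.card_range]

end OrderIsoIcc

lemma strictMono_div_one_add_abs : StrictMono fun x : ℝ ↦ x / (1 + |x|) := by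
  intro x y hxy
  dsimp only
  rw [div_lt_div_iff₀ (by positivity) (by positivity)]
  rcases abs_cases x with ⟨hx, hx'⟩ | ⟨hx, hx'⟩ <;>
    rcases abs_cases y with ⟨hy, hy'⟩ | ⟨hy, hy'⟩ <;> rw [hx, hy] <;> nlinarith

lemma abs_div_one_add_abs_lt_one (x : ℝ) : |x / (1 + |x|)| < 1 := by
  rw [abs_div, abs_of_pos (by positivity : 0 < 1 + |x|), div_lt_one (by positivity)]
  linarith

noncomputable def toIoo : ℝ ≃o Ioo (-1 : ℝ) 1 :=
  StrictMono.orderIsoOfRightInverse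
    (fun x ↦ ⟨x / (1 + |x|), abs_lt.1 (abs_div_one_add_abs_lt_one x)⟩)
    (fun _ _ h ↦ strictMono_div_one_add_abs h) (fun y ↦ y / (1 - |(y : ℝ)|)) fun y ↦ by
      have hy : |(y : ℝ)| < 1 := abs_lt.2 y.2
      have hpos : 0 < 1 - |(y : ℝ)| := by linarith
      ext
      change y / (1 - |(y : ℝ)|) / (1 + |y / (1 - |(y : ℝ)|)|) = y
      rw [abs_div, abs_of_pos hpos]
      field_simp
      ring

noncomputable def toIcc : ℝ → Icc (-1 : ℝ) 1 := inclusion Ioo_subset_Icc_self ∘ toIoo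

/-- The conjugate `toIcc ∘ (2 * ·) ∘ toIcc⁻¹`, extended to the endpoints. -/
noncomputable def doublingIcc : Icc (-1 : ℝ) 1 ≃o Icc (-1 : ℝ) 1 :=
  StrictMono.orderIsoOfRightInverse
    (fun y ↦ ⟨2 * (y / (1 + |(y : ℝ)|)), abs_le.1 (by
      have hy : |(y : ℝ)| ≤ 1 := abs_le.2 y.2
      rw [abs_mul, abs_two, abs_div, abs_of_pos (by positivity : 0 < 1 + |(y : ℝ)|),
        mul_div_assoc', div_le_one (by positivity)]
      linarith)⟩)
    (fun _ _ h ↦ Subtype.mk_lt_mk.2 <|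
      mul_lt_mul_of_pos_left (strictMono_div_one_add_abs (Subtype.coe_lt_coe.2 h)) two_pos)
    (fun y ↦ ⟨y / (2 - |(y : ℝ)|), abs_le.1 (by
      have hy : |(y : ℝ)| ≤ 1 := abs_le.2 y.2
      rw [abs_div, abs_of_pos (by linarith : 0 < 2 - |(y : ℝ)|), div_le_one (by linarith)]
      linarith)⟩)
    fun y ↦ by
      have hpos : 0 < 2 - |(y : ℝ)| := by linarith [abs_le.2 y.2]
      ext
      change 2 * (y / (2 - |(y : ℝ)|) / (1 + |y / (2 - |(y : ℝ)|)|)) = y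
      rw [abs_div, abs_of_pos hpos]
      field_simp
      ring

lemma doublingIcc_toIcc (x : ℝ) : doublingIcc (toIcc x) = toIcc (2 * x) := by
  ext
  change 2 * (x / (1 + |x|) / (1 + |x / (1 + |x|)|)) = 2 * x / (1 + |2 * x|)
  rw [abs_div, abs_of_pos (by positivity : 0 < 1 + |x|), abs_mul, abs_two]
  field_simp
  ring

lemma isCompactification_doublingIcc :
    IsCompactification (fun x : ℝ ↦ 2 * x) doublingIcc toIcc := by
  refine ⟨doublingIcc.continuous, (IsEmbedding.inclusion _).comp toIoo.toHomeomorph.isEmbedding,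
    ?_, funext doublingIcc_toIcc⟩
  refine ((denseRange_inclusion_iff _).2 ?_).comp toIoo.surjective.denseRange
    (continuous_inclusion _)
  rw [closure_Ioo (by norm_num)]

/-- For `f : ℝ → ℝ`, `f(x) = 2x` (with the usual topology on `ℝ`), `h_Ω(f) = 0`. -/
theorem stmt_16 : hOmega (fun x : ℝ => 2 * x) = 0 := by
  have hCR_zero : hCR (fun x : ℝ => 2 * x) = 0 :=
    hCR_eq_zero_of_forall_subsingleton fun K hK hf ↦ subsingleton_singleton.anti
      (subset_zero_of_isCompact_of_mapsTo_smul (c := (2 : ℝ)) (by norm_num) hK hf)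
  have hmem : htop doublingIcc ∈ etaleCompEntropies (fun x : ℝ => 2 * x) :=
    ⟨ℝ, _, _, id, isEtaleCover_id (continuous_const_mul 2),
      _, _, _, _, _, _, isCompactification_doublingIcc, rfl⟩
  have hentropy : htop doublingIcc = 0 := by
    rw [htop_eq_coverEntropy, doublingIcc.coverEntropy_Icc_eq_zero (by norm_num)]
  rw [hOmega, hCR_zero, max_eq_left (sInf_le_of_le hmem hentropy.le)]
end
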